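/- arXiv:1106.2332 — 2 statements merged into one kernel-verified Lean document; each statement's English description precedes it below -/
import Mathlib

section
/- Divergence-freeness implies conservation of total momentum (the Stokes-theorem claim of the paper's footnote, in flat four-dimensional spacetime): Let T : ℝ × (Fin 3 → ℝ) → Matrix (Fin 4) (Fin 4) ℝ be a smooth field (smooth jointly in the time variable t ∈ ℝ and the space variable x ∈ (Fin 3 → ℝ)) such that T (t,x) is symmetric for every (t,x), T is divergence-free in the sense that for every (t,x) and every index b : Fin 4, ∂_t (T (·,x) 0 b) (t) + ∑_{i=1}^{3} ∂_{x_i} (T (t,·) i b) (x) = 0, and T has uniformly compact spatial support: there is a compact set K ⊆ (Fin 3 → ℝ) with T (t,x) = 0 whenever x ∉ K. Then for every index b : Fin 4 the total momentum function t ↦ ∫_{(Fin 3 → ℝ)} T (t,x) 0 b dx is constant in t. -/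
open MeasureTheory

section aux
open Function Set Metric


lemma integral_deriv_eq_zero_cs {h : ℝ → ℝ} (hd : ContDiff ℝ 1 h)
    (hc : HasCompactSupport h) : ∫ a : ℝ, deriv h a = 0 := by
  obtain ⟨r, hr⟩ := hc.isBounded.subset_closedBall 0
  have hb : (r + 1) ∉ tsupport h := by
    intro hb
    have : |r + 1| ≤ r := by simpa [Real.dist_eq] using hr hb
    linarith [le_abs_self (r + 1)]
  have h1 : ∀ x ∉ Set.Iic (r + 1), deriv h x = 0 := by
    intro x hx
    apply notMem_support.1
    intro hxs
    have := hr (support_deriv_subset hxs)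
    simp only [mem_closedBall, Real.dist_eq, sub_zero] at this
    exact hx (by simp [Set.mem_Iic]; linarith [le_abs_self x])
  rw [← setIntegral_eq_integral_of_forall_compl_eq_zero h1,
    hc.integral_Iic_deriv_eq hd (r + 1), image_eq_zero_of_notMem_tsupport hb]

lemma integral_partial_eq_zero {g : (Fin 3 → ℝ) → ℝ} (hg : ContDiff ℝ (⊤ : ℕ∞) g)
    (hgc : HasCompactSupport g) (i : Fin 3) :
    ∫ x : Fin 3 → ℝ, fderiv ℝ g x (Pi.single i 1) = 0 := by
  set D : (Fin 3 → ℝ) → ℝ := fun x => fderiv ℝ g x (Pi.single i 1) with hD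
  have hDc : Continuous D :=
    (hg.continuous_fderiv (by simp)).clm_apply continuous_const
  have hDsupp : HasCompactSupport D := by
    refine hgc.mono' ?_
    intro x hx
    have hxne : fderiv ℝ g x ≠ 0 := by
      intro h0
      apply hx
      simp [hD, h0]
    exact support_fderiv_subset ℝ (f := g) hxne
  have hDint : Integrable D := hDc.integrable_of_hasCompactSupport hDsupp
  -- transfer to product
  have hmp := (MeasureTheory.volume_preserving_piFinSuccAbove (fun _ : Fin 3 => ℝ) i).symm
  have hint2 : Integrable (fun p : ℝ × (Fin 2 → ℝ) =>
      D ((MeasurableEquiv.piFinSuccAbove (fun _ : Fin 3 => ℝ) i).symm p)) :=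
    (hmp.integrable_comp_emb (MeasurableEquiv.measurableEmbedding _)).2 hDint
  have key : (∫ x : Fin 3 → ℝ, D x) =
      ∫ p : ℝ × (Fin 2 → ℝ), D ((MeasurableEquiv.piFinSuccAbove (fun _ : Fin 3 => ℝ) i).symm p) :=
    (hmp.integral_comp (MeasurableEquiv.measurableEmbedding _) D).symm
  rw [key, Measure.volume_eq_prod, MeasureTheory.integral_prod_symm _ hint2]
  have inner : ∀ y : Fin 2 → ℝ,
      (∫ a : ℝ, D ((MeasurableEquiv.piFinSuccAbove (fun _ : Fin 3 => ℝ) i).symm (a, y))) = 0 := by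
    intro y
    have hsymm : ∀ a : ℝ, (MeasurableEquiv.piFinSuccAbove (fun _ : Fin 3 => ℝ) i).symm (a, y)
        = i.insertNth a y := fun a => rfl
    -- the 1D slice
    set L : ℝ → (Fin 3 → ℝ) := fun a => i.insertNth a y with hL
    have hLlin : ∀ a, L a = (i.insertNth (0:ℝ) y : Fin 3 → ℝ) + a • (Pi.single i (1:ℝ) : Fin 3 → ℝ) := by
      intro a
      funext j
      rcases eq_or_ne j i with h | h
      · subst h; simp [hL]
      · obtain ⟨k, rfl⟩ := Fin.exists_succAbove_eq h
        simp [hL, Fin.insertNth_apply_succAbove, Pi.single_apply,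
          Fin.succAbove_ne i k]
    have hLd : ∀ a : ℝ, HasDerivAt L (Pi.single i (1:ℝ)) a := by
      intro a
      have : HasDerivAt (fun a : ℝ => (i.insertNth (0:ℝ) y : Fin 3 → ℝ) + a • (Pi.single i (1:ℝ) : Fin 3 → ℝ))
          (Pi.single i (1:ℝ)) a := by
        simpa using ((hasDerivAt_id a).smul_const (Pi.single i (1:ℝ))).const_add ((i.insertNth (0:ℝ) y : Fin 3 → ℝ))
      convert this using 1
      funext a; exact hLlin a
    have hslice : ∀ a : ℝ, HasDerivAt (fun a => g (L a)) (D (L a)) a := fun a =>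
      ((hg.differentiable (by simp) (L a)).hasFDerivAt).comp_hasDerivAt a (hLd a)
    have hsd : ContDiff ℝ 1 (fun a => g (L a)) := by
      have hLc : ContDiff ℝ 1 L := by
        have : ContDiff ℝ 1 (fun a : ℝ => (i.insertNth (0:ℝ) y : Fin 3 → ℝ) + a • (Pi.single i (1:ℝ) : Fin 3 → ℝ)) :=
          contDiff_const.add (contDiff_id.smul contDiff_const)
        convert this using 1; funext a; exact hLlin a
      exact (hg.of_le (by simp)).comp hLc
    have hscs : HasCompactSupport (fun a => g (L a)) := by
      obtain ⟨R, hR⟩ := hgc.isBounded.subset_closedBall 0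
      apply HasCompactSupport.intro (isCompact_Icc (a := -R) (b := R))
      intro a ha
      apply image_eq_zero_of_notMem_tsupport
      intro hmem
      have := hR hmem
      simp only [mem_closedBall, dist_zero_right] at this
      have hcoord : |a| ≤ ‖L a‖ := by
        have : |(L a) i| ≤ ‖L a‖ := by
          simpa [Real.norm_eq_abs] using norm_le_pi_norm (L a) i
        simpa [hL] using this
      simp only [Set.mem_Icc, not_and_or, not_le] at ha
      rcases ha with ha | ha <;> [skip; skip] <;>
        · have : |a| ≤ R := le_trans hcoord this
          cases abs_le.1 this with
          | intro h1 h2 => linarith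
    have : (fun a : ℝ => D (L a)) = deriv (fun a => g (L a)) := by
      funext a; exact ((hslice a).deriv).symm
    calc (∫ a : ℝ, D ((MeasurableEquiv.piFinSuccAbove (fun _ : Fin 3 => ℝ) i).symm (a, y)))
        = ∫ a : ℝ, D (L a) := rfl
      _ = ∫ a : ℝ, deriv (fun a => g (L a)) a := by rw [this]
      _ = 0 := integral_deriv_eq_zero_cs hsd hscs
  simp only [inner, integral_zero]
end aux

open Function Set Metric in
/-- Divergence-freeness implies conservation of total momentum: for a smooth,
symmetric, divergence-free energy-momentum field with uniformly compact spatial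
support, the total momentum `t ↦ ∫ x, T (t,x) 0 b` is constant in `t`. -/
theorem total_momentum_conserved
    (T : ℝ × (Fin 3 → ℝ) → Matrix (Fin 4) (Fin 4) ℝ)
    (hT_smooth : ∀ a b : Fin 4, ContDiff ℝ (⊤ : ℕ∞) (fun p : ℝ × (Fin 3 → ℝ) => T p a b))
    (hT_symm : ∀ p : ℝ × (Fin 3 → ℝ), (T p).IsSymm)
    (hT_div : ∀ (t : ℝ) (x : Fin 3 → ℝ) (b : Fin 4),
      deriv (fun s : ℝ => T (s, x) 0 b) t
        + ∑ i : Fin 3, fderiv ℝ (fun y : Fin 3 → ℝ => T (t, y) i.succ b) x (Pi.single i 1)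
      = 0)
    (hT_supp : ∃ K : Set (Fin 3 → ℝ), IsCompact K ∧
      ∀ (t : ℝ) (x : Fin 3 → ℝ), x ∉ K → T (t, x) = 0) :
    ∀ (b : Fin 4) (t₁ t₂ : ℝ),
      (∫ x : Fin 3 → ℝ, T (t₁, x) 0 b) = ∫ x : Fin 3 → ℝ, T (t₂, x) 0 b := by
  intro b t₁ t₂
  obtain ⟨K, hK, hKz⟩ := hT_supp
  set f : ℝ × (Fin 3 → ℝ) → ℝ := fun p => T p 0 b with hf
  have hfs : ContDiff ℝ (⊤ : ℕ∞) f := hT_smooth 0 b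
  -- time derivative of f along slices
  set G : ℝ × (Fin 3 → ℝ) → ℝ := fun p => fderiv ℝ f p (1, 0) with hG
  have hGc : Continuous G := (hfs.continuous_fderiv (by simp)).clm_apply continuous_const
  have hslice : ∀ (t : ℝ) (x : Fin 3 → ℝ),
      HasDerivAt (fun s => f (s, x)) (G (t, x)) t := by
    intro t x
    exact ((hfs.differentiable (by simp) (t, x)).hasFDerivAt).comp_hasDerivAt t
      ((hasDerivAt_id t).prodMk (hasDerivAt_const t x))
  have hGzero : ∀ (t : ℝ) (x : Fin 3 → ℝ), x ∉ K → G (t, x) = 0 := by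
    intro t x hx
    have h0 : (fun s : ℝ => f (s, x)) = fun _ => 0 := by
      funext s; simp [hf, hKz s x hx]
    have := hslice t x
    rw [h0] at this
    exact this.unique (hasDerivAt_const t 0)
  -- integrability of the slices of f
  have hfcont : ∀ t : ℝ, Continuous (fun x => f (t, x)) := fun t =>
    hfs.continuous.comp (continuous_const.prodMk continuous_id)
  have hfsupp : ∀ t : ℝ, HasCompactSupport (fun x => f (t, x)) := by
    intro t
    apply HasCompactSupport.intro hK
    intro x hx
    simp [hf, hKz t x hx]
  have hfint : ∀ t : ℝ, Integrable (fun x => f (t, x)) :=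
    fun t => (hfcont t).integrable_of_hasCompactSupport (hfsupp t)
  -- the momentum has derivative ∫ G at each time, and that integral is 0
  have hderiv : ∀ t₀ : ℝ, HasDerivAt (fun t => ∫ x : Fin 3 → ℝ, f (t, x)) 0 t₀ := by
    intro t₀
    obtain ⟨C, hC⟩ := (((isCompact_Icc (a := t₀ - 1) (b := t₀ + 1)).prod hK)).exists_bound_of_continuousOn
      hGc.continuousOn
    have key := hasDerivAt_integral_of_dominated_loc_of_deriv_le (μ := volume)
      (F := fun t x => f (t, x)) (F' := fun t x => G (t, x))
      (x₀ := t₀) (bound := K.indicator fun _ => max C 0) (s := Metric.ball t₀ 1) (Metric.ball_mem_nhds t₀ one_pos)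
      (Filter.Eventually.of_forall fun t => (hfcont t).aestronglyMeasurable)
      (hfint t₀)
      ((hGc.comp (continuous_const.prodMk continuous_id)).aestronglyMeasurable)
      (Filter.Eventually.of_forall ?_) ?_
      (Filter.Eventually.of_forall fun x t _ => hslice t x)
    · have hzero : (∫ x : Fin 3 → ℝ, G (t₀, x)) = 0 := by
        have hGrw : ∀ x : Fin 3 → ℝ, G (t₀, x)
            = -(∑ i : Fin 3, fderiv ℝ (fun y : Fin 3 → ℝ => T (t₀, y) i.succ b) x
                (Pi.single i 1)) := by
          intro x
          have hd := hT_div t₀ x b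
          have : deriv (fun s : ℝ => T (s, x) 0 b) t₀ = G (t₀, x) := (hslice t₀ x).deriv
          linarith [hd, this]
        calc (∫ x : Fin 3 → ℝ, G (t₀, x))
            = ∫ x : Fin 3 → ℝ, -(∑ i : Fin 3,
                fderiv ℝ (fun y : Fin 3 → ℝ => T (t₀, y) i.succ b) x (Pi.single i 1)) := by
              simp_rw [hGrw]
          _ = -(∑ i : Fin 3, ∫ x : Fin 3 → ℝ,
                fderiv ℝ (fun y : Fin 3 → ℝ => T (t₀, y) i.succ b) x (Pi.single i 1)) := by
              rw [integral_neg, integral_finset_sum]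
              intro i _
              set g : (Fin 3 → ℝ) → ℝ := fun y => T (t₀, y) i.succ b with hg
              have hgs : ContDiff ℝ (⊤ : ℕ∞) g :=
                (hT_smooth i.succ b).comp (contDiff_const.prodMk contDiff_id)
              have hgsupp : HasCompactSupport g := by
                apply HasCompactSupport.intro hK
                intro x hx
                simp [hg, hKz t₀ x hx]
              have hDc : Continuous (fun x => fderiv ℝ g x (Pi.single i 1)) :=
                (hgs.continuous_fderiv (by simp)).clm_apply continuous_const
              refine hDc.integrable_of_hasCompactSupport (hgsupp.mono' ?_)
              intro x hx
              have hxne : fderiv ℝ g x ≠ 0 := by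
                intro h0
                apply hx
                simp [h0]
              exact support_fderiv_subset ℝ (f := g) hxne
          _ = 0 := by
              rw [Finset.sum_congr rfl fun i _ => ?_, Finset.sum_const_zero, neg_zero]
              set g : (Fin 3 → ℝ) → ℝ := fun y => T (t₀, y) i.succ b with hg
              have hgs : ContDiff ℝ (⊤ : ℕ∞) g :=
                (hT_smooth i.succ b).comp (contDiff_const.prodMk contDiff_id)
              have hgsupp : HasCompactSupport g := by
                apply HasCompactSupport.intro hK
                intro x hx
                simp [hg, hKz t₀ x hx]
              exact integral_partial_eq_zero hgs hgsupp i
      rw [← hzero]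
      exact key.2
    · -- bound
      intro x t ht
      by_cases hx : x ∈ K
      · rw [Set.indicator_of_mem hx]
        refine le_trans (hC (t, x) ⟨?_, hx⟩) (le_max_left _ _)
        simp only [Set.mem_Icc]
        have := abs_lt.1 (by simpa [Real.dist_eq] using mem_ball_iff_norm.1 ht)
        constructor <;> linarith [this.1, this.2]
      · rw [Set.indicator_of_notMem hx]
        simp only [hGzero t x hx, norm_zero, le_refl]
    · -- bound integrable
      rw [integrable_indicator_iff hK.measurableSet]
      exact integrableOn_const hK.measure_lt_top.ne
  have hdiff : Differentiable ℝ (fun t => ∫ x : Fin 3 → ℝ, f (t, x)) :=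
    fun t => (hderiv t).differentiableAt
  have := is_const_of_deriv_eq_zero hdiff (fun t => (hderiv t).deriv) t₁ t₂
  simpa [hf] using this
end

section
/- First-moment identity for divergence-free tensor fields (flat four-dimensional spacetime): Let T : ℝ × (Fin 3 → ℝ) → Matrix (Fin 4) (Fin 4) ℝ be a smooth field (smooth jointly in the time variable t ∈ ℝ and the space variable x ∈ (Fin 3 → ℝ)) such that T (t,x) is symmetric for every (t,x), T is divergence-free in the sense that for every (t,x) and every index b : Fin 4, ∂_t (T (·,x) 0 b) (t) + ∑_{i=1}^{3} ∂_{x_i} (T (t,·) i b) (x) = 0, and T has uniformly compact spatial support: there is a compact set K ⊆ (Fin 3 → ℝ) with T (t,x) = 0 whenever x ∉ K. Then for every spatial index i ∈ {1,2,3}, every index b : Fin 4, and every t ∈ ℝ, the function t ↦ ∫_{(Fin 3 → ℝ)} (x i) * T (t,x) 0 b dx is differentiable and its derivative at t equals ∫_{(Fin 3 → ℝ)} T (t,x) i b dx. -/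
open MeasureTheory Set

lemma auxA (g : (Fin 3 → ℝ) → ℝ) (hg : ContDiff ℝ (⊤ : ℕ∞) g)
    (hsupp : HasCompactSupport g) (j : Fin 3) :
    ∫ x : Fin 3 → ℝ, fderiv ℝ g x (Pi.single j 1) = 0 := by
  classical
  obtain ⟨R, hR⟩ := hsupp.isBounded.subset_closedBall 0
  set R0 : ℝ := |R| + 1 with hR0
  have hRlt : R < R0 := lt_of_le_of_lt (le_abs_self R) (by simp [hR0])
  have hmem : ∀ x ∈ tsupport g, ∀ k, |x k| < R0 := by
    intro x hx k
    have h1 : ‖x‖ ≤ R := by simpa [dist_eq_norm] using hR hx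
    exact lt_of_le_of_lt ((norm_le_pi_norm x k).trans h1) hRlt
  have hnot : ∀ x : Fin 3 → ℝ, (∃ k, ¬ |x k| < R0) → fderiv ℝ g x = 0 := by
    intro x ⟨k, hk⟩
    by_contra h
    exact hk (hmem x (support_fderiv_subset ℝ h) k)
  set a : Fin 3 → ℝ := fun _ => -R0
  set b : Fin 3 → ℝ := fun _ => R0
  have hle : a ≤ b := fun k => by
    simp only [a, b]; nlinarith [abs_nonneg R]
  set f : Fin 3 → (Fin 3 → ℝ) → ℝ := fun k => if k = j then g else 0 with hf
  set f' : Fin 3 → (Fin 3 → ℝ) → (Fin 3 → ℝ) →L[ℝ] ℝ :=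
    fun k x => if k = j then fderiv ℝ g x else 0 with hf'
  have hsum : ∀ x, (∑ k : Fin 3, f' k x (Pi.single k 1)) = fderiv ℝ g x (Pi.single j 1) := by
    intro x
    rw [Finset.sum_eq_single j]
    · simp [f']
    · intro k _ hk; simp [f', hk]
    · simp
  have hcont : Continuous fun x => fderiv ℝ g x (Pi.single j 1) :=
    (hg.continuous_fderiv (by simp)).clm_apply continuous_const
  have key := integral_divergence_of_hasFDerivAt_off_countable' a b hle f f' ∅
    countable_empty
    (by
      intro k
      by_cases hk : k = j
      · simp [f, hk]; exact hg.continuous.continuousOn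
      · simp [f, hk]; exact continuous_zero.continuousOn)
    (by
      intro x _ k
      by_cases hk : k = j
      · simpa [f, f', hk] using (hg.differentiable (by simp) x).hasFDerivAt
      · simp [f, f', hk]; exact hasFDerivAt_const (0:ℝ) x)
    (by
      apply ContinuousOn.integrableOn_compact isCompact_Icc
      exact (continuous_finset_sum _ fun k _ => by
        by_cases hk : k = j
        · simpa [f', hk] using hcont.congr fun x => by simp [f', hk]
        · simp [f', hk]; exact continuous_const).continuousOn)
  -- RHS is zero
  have hzero : ∀ (k : Fin 3) (c : ℝ), ¬ |c| < R0 → ∀ y : Fin 2 → ℝ,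
      f k (k.insertNth c y) = 0 := by
    intro k c hc y
    by_cases hk : k = j
    · subst hk
      simp only [f, if_pos rfl]
      apply image_eq_zero_of_notMem_tsupport
      intro hmem'
      exact hc (by simpa using hmem (k.insertNth c y) hmem' k)
    · simp [f, hk]
  have hRHS : (∑ k : Fin 3,
      ((∫ (x : Fin 2 → ℝ) in Icc (a ∘ k.succAbove) (b ∘ k.succAbove), f k (k.insertNth (b k) x)) -
        (∫ (x : Fin 2 → ℝ) in Icc (a ∘ k.succAbove) (b ∘ k.succAbove), f k (k.insertNth (a k) x)))) = 0 := by
    apply Finset.sum_eq_zero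
    intro k _
    have h1 : ∀ x : Fin 2 → ℝ, f k (k.insertNth (b k) x) = 0 :=
      hzero k (b k) (not_lt.2 (le_abs_self R0))
    have h2 : ∀ x : Fin 2 → ℝ, f k (k.insertNth (a k) x) = 0 :=
      hzero k (a k) (not_lt.2 ((le_abs_self R0).trans_eq (abs_neg R0).symm))
    simp [h1, h2]
  rw [hRHS] at key
  rw [← setIntegral_eq_integral_of_forall_compl_eq_zero (s := Icc a b)
    (fun x hx => ?_), ← key]
  · exact setIntegral_congr_fun measurableSet_Icc fun x _ => (hsum x).symm
  · have : ∃ k, ¬ |x k| < R0 := by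
      by_contra h
      push_neg at h
      exact hx ⟨fun k => by simpa [a] using (abs_lt.1 (h k)).1.le,
        fun k => by simpa [b] using (abs_lt.1 (h k)).2.le⟩
    rw [hnot x this]; simp


lemma auxB (g : (Fin 3 → ℝ) → ℝ) (hg : ContDiff ℝ (⊤ : ℕ∞) g) (hsupp : HasCompactSupport g)
    (i j : Fin 3) :
    ∫ x : Fin 3 → ℝ, x i * fderiv ℝ g x (Pi.single j 1)
      = -((if i = j then (1:ℝ) else 0) * ∫ x : Fin 3 → ℝ, g x) := by
  classical
  set c : ℝ := if i = j then (1:ℝ) else 0 with hc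
  set h : (Fin 3 → ℝ) → ℝ := fun x => x i * g x with hh
  set P : (Fin 3 → ℝ) →L[ℝ] ℝ := ContinuousLinearMap.proj i with hP
  have hproj : ∀ x : Fin 3 → ℝ, HasFDerivAt (fun y : Fin 3 → ℝ => y i) P x := fun x =>
    P.hasFDerivAt
  have hhd : ∀ x, HasFDerivAt h
      (x i • fderiv ℝ g x + g x • P) x := fun x =>
    (hproj x).mul ((hg.differentiable (by simp) x).hasFDerivAt)
  have hhsmooth : ContDiff ℝ (⊤ : ℕ∞) h := P.contDiff.mul hg
  have hhsupp : HasCompactSupport h :=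
    HasCompactSupport.intro hsupp fun x hx => by
      simp [h, image_eq_zero_of_notMem_tsupport hx]
  have hA := auxA h hhsmooth hhsupp j
  have heq : ∀ x : Fin 3 → ℝ, fderiv ℝ h x (Pi.single j 1)
      = x i * fderiv ℝ g x (Pi.single j 1) + g x * c := by
    intro x
    rw [(hhd x).fderiv]
    simp only [ContinuousLinearMap.add_apply, ContinuousLinearMap.smul_apply,
      smul_eq_mul]
    congr 1
    rw [hP]
    simp only [ContinuousLinearMap.proj_apply, Pi.single_apply, hc]
  have hint1 : Integrable (fun x : Fin 3 → ℝ => x i * fderiv ℝ g x (Pi.single j 1)) := by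
    apply Continuous.integrable_of_hasCompactSupport
    · exact (continuous_apply i).mul ((hg.continuous_fderiv (by simp)).clm_apply continuous_const)
    · exact HasCompactSupport.intro hsupp fun x hx => by
        have : fderiv ℝ g x = 0 := by
          by_contra hne
          exact hx (support_fderiv_subset ℝ hne)
        simp [this]
  have hint2 : Integrable (fun x : Fin 3 → ℝ => g x * c) :=
    (hg.continuous.integrable_of_hasCompactSupport hsupp).mul_const c
  rw [show (∫ x : Fin 3 → ℝ, fderiv ℝ h x (Pi.single j 1))
      = (∫ x : Fin 3 → ℝ, (x i * fderiv ℝ g x (Pi.single j 1) + g x * c)) from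
    integral_congr_ae (Filter.Eventually.of_forall heq),
    integral_add hint1 hint2] at hA
  rw [integral_mul_const] at hA
  rw [hc] at hA ⊢
  linarith [hA]

/-- First-moment identity for divergence-free tensor fields: the time derivative
of the first spatial moment `∫ x, x i * T (t,x) 0 b` equals the integrated
stress `∫ x, T (t,x) i b` (with `i` a spatial index, i.e. `i.succ : Fin 4`). -/
theorem first_moment_identity
    (T : ℝ × (Fin 3 → ℝ) → Matrix (Fin 4) (Fin 4) ℝ)
    (hT_smooth : ∀ a b : Fin 4, ContDiff ℝ (⊤ : ℕ∞) (fun p : ℝ × (Fin 3 → ℝ) => T p a b))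
    (hT_symm : ∀ p : ℝ × (Fin 3 → ℝ), (T p).IsSymm)
    (hT_div : ∀ (t : ℝ) (x : Fin 3 → ℝ) (b : Fin 4),
      deriv (fun s : ℝ => T (s, x) 0 b) t
        + ∑ i : Fin 3, fderiv ℝ (fun y : Fin 3 → ℝ => T (t, y) i.succ b) x (Pi.single i 1)
      = 0)
    (hT_supp : ∃ K : Set (Fin 3 → ℝ), IsCompact K ∧
      ∀ (t : ℝ) (x : Fin 3 → ℝ), x ∉ K → T (t, x) = 0) :
    ∀ (i : Fin 3) (b : Fin 4) (t : ℝ),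
      HasDerivAt (fun s : ℝ => ∫ x : Fin 3 → ℝ, x i * T (s, x) 0 b)
        (∫ x : Fin 3 → ℝ, T (t, x) i.succ b) t := by
  classical
  obtain ⟨K, hK, hKsupp⟩ := hT_supp
  intro i b t
  set u : ℝ × (Fin 3 → ℝ) → ℝ := fun p => T p 0 b with hu
  have hu_smooth : ContDiff ℝ (⊤ : ℕ∞) u := hT_smooth 0 b
  set Dt : ℝ × (Fin 3 → ℝ) → ℝ := fun p => fderiv ℝ u p (1, 0) with hDt
  have hDt_cont : Continuous Dt :=
    (hu_smooth.continuous_fderiv (by simp)).clm_apply continuous_const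
  have hpartial : ∀ (s : ℝ) (x : Fin 3 → ℝ),
      HasDerivAt (fun s' : ℝ => u (s', x)) (Dt (s, x)) s := by
    intro s x
    have h1 : HasDerivAt (fun s' : ℝ => (s', x)) ((1 : ℝ), (0 : Fin 3 → ℝ)) s :=
      (hasDerivAt_id s).prodMk (hasDerivAt_const s x)
    exact (hu_smooth.differentiable (by simp) (s, x)).hasFDerivAt.comp_hasDerivAt s h1
  have hDt_zero : ∀ (s : ℝ) (x : Fin 3 → ℝ), x ∉ K → Dt (s, x) = 0 := by
    intro s x hx
    have hopen : IsOpen ((univ : Set ℝ) ×ˢ Kᶜ) :=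
      isOpen_univ.prod hK.isClosed.isOpen_compl
    have hz : u =ᶠ[nhds (s, x)] (fun _ => (0:ℝ)) := by
      filter_upwards [hopen.mem_nhds (by simp [hx])] with p hp
      rcases p with ⟨s', x'⟩
      simp only [hu]
      rw [hKsupp s' x' (by simpa using hp.2)]
      simp
    simp only [hDt]
    rw [Filter.EventuallyEq.fderiv_eq hz, fderiv_fun_const]
    simp
  -- dominating bound
  set G : ℝ × (Fin 3 → ℝ) → ℝ := fun p => p.2 i * Dt p with hG
  have hG_cont : Continuous G := ((continuous_apply i).comp continuous_snd).mul hDt_cont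
  obtain ⟨C, hC⟩ := ((isCompact_Icc (a := t-1) (b := t+1)).prod hK).exists_bound_of_continuousOn
    (f := G) hG_cont.continuousOn
  set bound : (Fin 3 → ℝ) → ℝ := K.indicator fun _ => C with hbound
  have hbound_int : Integrable bound := by
    rw [hbound, integrable_indicator_iff hK.measurableSet]
    exact integrableOn_const hK.measure_lt_top.ne
  have key := hasDerivAt_integral_of_dominated_loc_of_deriv_le
    (F := fun s x => x i * u (s, x)) (F' := fun s x => x i * Dt (s, x))
    (μ := volume) (x₀ := t) (bound := bound) (Metric.ball_mem_nhds t one_pos)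
    (Filter.Eventually.of_forall fun s =>
      (((continuous_apply i).mul (hu_smooth.continuous.comp
        (Continuous.prodMk_right s))).aestronglyMeasurable))
    (((continuous_apply i).mul (hu_smooth.continuous.comp
        (Continuous.prodMk_right t))).integrable_of_hasCompactSupport
      (HasCompactSupport.intro hK fun x hx => by
        simp only [hu, Function.comp_apply, Pi.mul_apply]; rw [hKsupp t x hx]; simp))
    (((continuous_apply i).mul (hDt_cont.comp (Continuous.prodMk_right t))).aestronglyMeasurable)
    (Filter.Eventually.of_forall fun x => by
      intro s hs
      by_cases hx : x ∈ K
      · have hmem : (s, x) ∈ Icc (t-1) (t+1) ×ˢ K := by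
          constructor
          · have := Metric.mem_ball.1 hs
            rw [Real.dist_eq] at this
            constructor <;> [linarith [abs_lt.1 this]; linarith [(abs_lt.1 this).2]]
          · exact hx
        have := hC (s, x) hmem
        simpa [hbound, indicator_of_mem hx, hG] using this
      · simp [hDt_zero s x hx, hbound, indicator_of_notMem hx])
    hbound_int
    (Filter.Eventually.of_forall fun x => by
      intro s _
      exact (hpartial s x).const_mul (x i))
  obtain ⟨-, hderiv⟩ := key
  -- identify the derivative integral
  have hreplace : (∫ x : Fin 3 → ℝ, x i * Dt (t, x))
      = ∫ x : Fin 3 → ℝ, T (t, x) i.succ b := by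
    have hdiveq : ∀ x : Fin 3 → ℝ, x i * Dt (t, x)
        = ∑ j : Fin 3, -(x i * fderiv ℝ (fun y : Fin 3 → ℝ => T (t, y) j.succ b) x (Pi.single j 1)) := by
      intro x
      have h1 : deriv (fun s : ℝ => T (s, x) 0 b) t = Dt (t, x) := (hpartial t x).deriv
      have h2 := hT_div t x b
      rw [h1] at h2
      have h3 : Dt (t, x)
          = -∑ j : Fin 3, fderiv ℝ (fun y : Fin 3 → ℝ => T (t, y) j.succ b) x (Pi.single j 1) := by
        linarith
      rw [h3, mul_neg, Finset.mul_sum, ← Finset.sum_neg_distrib]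
    have gsm : ∀ j : Fin 3, ContDiff ℝ (⊤ : ℕ∞) (fun y : Fin 3 → ℝ => T (t, y) j.succ b) := fun j =>
      (hT_smooth j.succ b).comp (contDiff_const.prodMk contDiff_id)
    have gsupp : ∀ j : Fin 3, HasCompactSupport (fun y : Fin 3 → ℝ => T (t, y) j.succ b) :=
      fun j => HasCompactSupport.intro hK fun x hx => by rw [hKsupp t x hx]; simp
    have gint : ∀ j : Fin 3, Integrable (fun x : Fin 3 → ℝ =>
        x i * fderiv ℝ (fun y : Fin 3 → ℝ => T (t, y) j.succ b) x (Pi.single j 1)) := by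
      intro j
      apply Continuous.integrable_of_hasCompactSupport
      · exact (continuous_apply i).mul
          (((gsm j).continuous_fderiv (by simp)).clm_apply continuous_const)
      · refine HasCompactSupport.intro (gsupp j) fun x hx => ?_
        have hz : fderiv ℝ (fun y : Fin 3 → ℝ => T (t, y) j.succ b) x = 0 := by
          by_contra hne
          exact hx (support_fderiv_subset ℝ hne)
        simp [hz]
    calc (∫ x : Fin 3 → ℝ, x i * Dt (t, x))
        = ∫ x : Fin 3 → ℝ, ∑ j : Fin 3,
            -(x i * fderiv ℝ (fun y : Fin 3 → ℝ => T (t, y) j.succ b) x (Pi.single j 1)) :=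
          integral_congr_ae (Filter.Eventually.of_forall hdiveq)
      _ = ∑ j : Fin 3, ∫ x : Fin 3 → ℝ,
            -(x i * fderiv ℝ (fun y : Fin 3 → ℝ => T (t, y) j.succ b) x (Pi.single j 1)) :=
          integral_finset_sum _ fun j _ => (gint j).neg
      _ = ∑ j : Fin 3, (if i = j then (1:ℝ) else 0) * ∫ x : Fin 3 → ℝ, T (t, x) j.succ b := by
          refine Finset.sum_congr rfl fun j _ => ?_
          rw [integral_neg, auxB _ (gsm j) (gsupp j) i j, neg_neg]
      _ = ∫ x : Fin 3 → ℝ, T (t, x) i.succ b := by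
          simp
  rw [← hreplace]
  exact hderiv
end
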